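/- Any binary phylogenetic network can be generated from the single-leaf network by a finite sequence of speciation events, m-type hybrid-speciation events, and extinction events, where each m-type event takes two leaves x, y and replaces them with three leaves x', y', z with z below a new reticulation node whose parents are the new parents of x' and y'. -/

import Mathlib

/-- A (directed) phylogenetic-network-like graph on a finite set of
natural-number labelled vertices. -/
structure PNet where
  verts : Finset ℕ
  adj : ℕ → ℕ → Prop
  adjDec : DecidableRel adj
  adj_mem : ∀ u v, adj u v → u ∈ verts ∧ v ∈ verts

attribute [instance] PNet.adjDec

namespace PNet

/-- In-degree of a vertex. -/
def indeg (N : PNet) (v : ℕ) : ℕ := (N.verts.filter fun u => N.adj u v).card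

/-- Out-degree of a vertex. -/
def outdeg (N : PNet) (v : ℕ) : ℕ := (N.verts.filter fun w => N.adj v w).card

/-- A leaf is a vertex of out-degree 0. -/
def IsLeaf (N : PNet) (v : ℕ) : Prop := v ∈ N.verts ∧ N.outdeg v = 0

/-- A reticulation node is a vertex of in-degree 2. -/
def IsRetic (N : PNet) (v : ℕ) : Prop := v ∈ N.verts ∧ N.indeg v = 2

/-- A root is a vertex of in-degree 0. -/
def IsRoot (N : PNet) (v : ℕ) : Prop := v ∈ N.verts ∧ N.indeg v = 0

/-- The digraph is acyclic. -/
def Acyclic (N : PNet) : Prop := ∀ v, ¬ Relation.TransGen N.adj v v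

/-- A binary (rooted) phylogenetic network: acyclic, a root of in-degree 0 and
out-degree 2 from which all vertices are reachable, and every other vertex is a
tree node (in 1, out 2), a reticulation node (in 2, out 1) or a leaf (in 1, out 0). -/
def IsBinary (N : PNet) : Prop :=
  N.Acyclic ∧ ∃ ρ, N.IsRoot ρ ∧ N.outdeg ρ = 2 ∧
    (∀ v ∈ N.verts, Relation.ReflTransGen N.adj ρ v) ∧
    (∀ v ∈ N.verts, v ≠ ρ →
      (N.indeg v = 1 ∧ N.outdeg v = 2) ∨ (N.indeg v = 2 ∧ N.outdeg v = 1) ∨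
      (N.indeg v = 1 ∧ N.outdeg v = 0))

/-- Tree-child: every internal node has a child that is not a reticulation. -/
def TreeChild (N : PNet) : Prop :=
  ∀ v ∈ N.verts, N.outdeg v ≠ 0 → ∃ c, N.adj v c ∧ N.indeg c ≠ 2

/-- Stack-free: no edge joins two reticulation nodes. -/
def StackFree (N : PNet) : Prop :=
  ∀ u v, N.adj u v → ¬ (N.indeg u = 2 ∧ N.indeg v = 2)

end PNet

namespace PNet

/-- The network consisting of a single leaf (one vertex, no edges). -/
def SingleLeaf (N : PNet) : Prop := ∃ v, N.verts = {v} ∧ ∀ u w, ¬ N.adj u w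

/-- Speciation event: a leaf `x` is replaced by a tree node with two new leaf
children `a` and `b`. -/
def Speciation (N N' : PNet) : Prop :=
  ∃ x a b, N.IsLeaf x ∧ a ∉ N.verts ∧ b ∉ N.verts ∧ a ≠ b ∧
    N'.verts = insert a (insert b N.verts) ∧
    ∀ u v, N'.adj u v ↔ (N.adj u v ∨ (u = x ∧ v = a) ∨ (u = x ∧ v = b))

/-- y-type merging event: two distinct leaves `x` and `y` (with distinct
parents) are glued into a reticulation node with in-edges from the former
parents of `x` and `y` and a single new leaf child `z`. -/
def YMerge (N N' : PNet) : Prop :=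
  ∃ x y z px py, x ≠ y ∧ N.IsLeaf x ∧ N.IsLeaf y ∧ z ∉ N.verts ∧
    N.adj px x ∧ N.adj py y ∧ px ≠ py ∧
    N'.verts = insert z (N.verts \ {y}) ∧
    ∀ u v, N'.adj u v ↔
      ((N.adj u v ∧ v ≠ y) ∨ (u = py ∧ v = x) ∨ (u = x ∧ v = z))

/-- n-type (HGT) reticulation event: subdivide the pendant edges above two
distinct leaves `x` and `y` with new nodes `u₀` and `v₀` and add the arc
`(u₀, v₀)`, making `v₀` a reticulation node; `x` and `y` remain leaves. -/
def HGT (N N' : PNet) : Prop :=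
  ∃ x y u₀ v₀ px py, x ≠ y ∧ N.IsLeaf x ∧ N.IsLeaf y ∧
    N.adj px x ∧ N.adj py y ∧
    u₀ ∉ N.verts ∧ v₀ ∉ N.verts ∧ u₀ ≠ v₀ ∧
    N'.verts = insert u₀ (insert v₀ N.verts) ∧
    ∀ a b, N'.adj a b ↔
      ((N.adj a b ∧ b ≠ x ∧ b ≠ y) ∨ (a = px ∧ b = u₀) ∨ (a = py ∧ b = v₀) ∨
        (a = u₀ ∧ b = x) ∨ (a = v₀ ∧ b = y) ∨ (a = u₀ ∧ b = v₀))

/-- m-type hybrid-speciation event: two distinct leaves `x` and `y` each become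
tree nodes, with new leaf children `x'` resp. `y'` and with edges into a shared
new reticulation node `w`, which has a single new leaf child `z`. -/
def MType (N N' : PNet) : Prop :=
  ∃ x y x' y' w z, x ≠ y ∧ N.IsLeaf x ∧ N.IsLeaf y ∧
    x' ∉ N.verts ∧ y' ∉ N.verts ∧ w ∉ N.verts ∧ z ∉ N.verts ∧
    x' ≠ y' ∧ x' ≠ w ∧ x' ≠ z ∧ y' ≠ w ∧ y' ≠ z ∧ w ≠ z ∧
    N'.verts = insert x' (insert y' (insert w (insert z N.verts))) ∧
    ∀ a b, N'.adj a b ↔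
      (N.adj a b ∨ (a = x ∧ b = x') ∨ (a = x ∧ b = w) ∨
        (a = y ∧ b = y') ∨ (a = y ∧ b = w) ∨ (a = w ∧ b = z))

/-- Extinction event: delete a leaf `x` and suppress its resulting degree-two
parent `p` (when `p` is not the root). -/
def Extinct (N N' : PNet) : Prop :=
  ∃ x p c, N.IsLeaf x ∧ N.adj p x ∧ N.adj p c ∧ c ≠ x ∧
    ((N.indeg p = 0 ∧ N'.verts = N.verts \ {x} ∧
        ∀ u v, N'.adj u v ↔ (N.adj u v ∧ v ≠ x)) ∨
     (∃ q, N.adj q p ∧ N'.verts = N.verts \ {x, p} ∧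
        ∀ u v, N'.adj u v ↔
          ((N.adj u v ∧ u ≠ p ∧ v ≠ p ∧ v ≠ x) ∨ (u = q ∧ v = c))))

/-- Isomorphism of (leaf-unlabelled) network topologies. -/
def Iso (M N : PNet) : Prop :=
  ∃ f : ℕ → ℕ, Set.BijOn f ↑M.verts ↑N.verts ∧
    ∀ u v, u ∈ M.verts → v ∈ M.verts → (M.adj u v ↔ N.adj (f u) (f v))

end PNet


/-!
Induction on the number of arcs. The root of a binary network is internal, so by acyclicity some
internal vertex `v` has only leaves as children. If `v` has two children, deleting them leaves
either the single leaf (when `v` is the root) or a smaller binary network, and `N` is recovered by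
a speciation at `v`. Otherwise `v` is a reticulation with parents `p`, `q` and a single leaf child
`z`; replacing `v` and `z` by fresh leaves below `p` and `q` gives a smaller binary network from
which `N` is recovered by a y-type merge, and a y-merge is an m-type event followed by two
extinctions. The events produce `N` itself, so the isomorphism is the identity.
-/

namespace PNet

variable {N : PNet} {a b u v w : ℕ}

lemma mem_verts_of_adj_left (h : N.adj u v) : u ∈ N.verts := (N.adj_mem u v h).1

lemma mem_verts_of_adj_right (h : N.adj u v) : v ∈ N.verts := (N.adj_mem u v h).2

def children (N : PNet) (v : ℕ) : Finset ℕ := N.verts.filter (N.adj v ·)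

def parents (N : PNet) (v : ℕ) : Finset ℕ := N.verts.filter (N.adj · v)

@[simp] lemma mem_children : w ∈ N.children v ↔ N.adj v w := by
  simpa [children] using fun h => mem_verts_of_adj_right h

@[simp] lemma mem_parents : u ∈ N.parents v ↔ N.adj u v := by
  simpa [parents] using fun h => mem_verts_of_adj_left h

lemma outdeg_eq_card_children : N.outdeg v = (N.children v).card := rfl

lemma indeg_eq_card_parents : N.indeg v = (N.parents v).card := rfl

lemma outdeg_eq_zero_iff : N.outdeg v = 0 ↔ ∀ w, ¬ N.adj v w := by
  simp [outdeg_eq_card_children, Finset.eq_empty_iff_forall_notMem]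

lemma indeg_eq_zero_iff : N.indeg v = 0 ↔ ∀ u, ¬ N.adj u v := by
  simp [indeg_eq_card_parents, Finset.eq_empty_iff_forall_notMem]

def ofRel (V : Finset ℕ) (r : ℕ → ℕ → Prop) [DecidableRel r] : PNet where
  verts := V
  adj a b := r a b ∧ a ∈ V ∧ b ∈ V
  adjDec := fun _ _ => inferInstance
  adj_mem := fun _ _ h => h.2

section ofRel

variable {V : Finset ℕ} {r : ℕ → ℕ → Prop} [DecidableRel r]

@[simp] lemma verts_ofRel : (ofRel V r).verts = V := rfl

lemma adj_ofRel (h : ∀ a b, r a b → a ∈ V ∧ b ∈ V) : (ofRel V r).adj a b ↔ r a b :=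
  ⟨And.left, fun hr => ⟨hr, h a b hr⟩⟩

end ofRel

def edges (N : PNet) : Finset (ℕ × ℕ) := (N.verts ×ˢ N.verts).filter fun e => N.adj e.1 e.2

@[simp] lemma mem_edges {e : ℕ × ℕ} : e ∈ N.edges ↔ N.adj e.1 e.2 := by
  simpa [edges] using fun h => N.adj_mem _ _ h

lemma Acyclic.mono {M : PNet} (hN : N.Acyclic) (h : ∀ a b, M.adj a b → N.adj a b) :
    M.Acyclic :=
  fun v hv => hN v (Relation.TransGen.mono h _ _ hv)

def deleteVerts (N : PNet) (T : Finset ℕ) : PNet := ofRel (N.verts \ T) N.adj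

section deleteVerts

variable {T : Finset ℕ}

@[simp] lemma verts_deleteVerts : (N.deleteVerts T).verts = N.verts \ T := rfl

@[simp] lemma adj_deleteVerts : (N.deleteVerts T).adj a b ↔ N.adj a b ∧ a ∉ T ∧ b ∉ T := by
  simp only [deleteVerts, ofRel, Finset.mem_sdiff]
  exact ⟨fun h => ⟨h.1, h.2.1.2, h.2.2.2⟩, fun h =>
    ⟨h.1, ⟨mem_verts_of_adj_left h.1, h.2.1⟩, ⟨mem_verts_of_adj_right h.1, h.2.2⟩⟩⟩

lemma children_deleteVerts (hv : v ∉ T) : (N.deleteVerts T).children v = N.children v \ T := by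
  ext; simp [hv]

lemma parents_deleteVerts (hT : ∀ a ∈ T, ∀ b, N.adj a b → b ∈ T) (hv : v ∉ T) :
    (N.deleteVerts T).parents v = N.parents v := by
  ext u; simpa [hv] using fun h hu => hv (hT u hu v h)

lemma Acyclic.deleteVerts (hN : N.Acyclic) : (N.deleteVerts T).Acyclic :=
  hN.mono fun _ _ h => (adj_deleteVerts.1 h).1

lemma reflTransGen_deleteVerts (hT : ∀ a ∈ T, ∀ b, N.adj a b → b ∈ T)
    (h : Relation.ReflTransGen N.adj u v) (hv : v ∉ T) :
    Relation.ReflTransGen (N.deleteVerts T).adj u v := by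
  induction h with
  | refl => rfl
  | @tail b c _ hbc ih =>
    have hb : b ∉ T := fun hb => hv (hT b hb c hbc)
    exact (ih hb).tail (adj_deleteVerts.2 ⟨hbc, hb, hv⟩)

lemma edges_deleteVerts : (N.deleteVerts T).edges = N.edges.filter fun e => e.1 ∉ T ∧ e.2 ∉ T := by
  ext; simp

end deleteVerts

def addLeaf (N : PNet) (p x : ℕ) : PNet :=
  ofRel (insert x N.verts) fun a b => N.adj a b ∨ (a = p ∧ b = x)

section addLeaf

variable {p x : ℕ}

@[simp] lemma verts_addLeaf : (N.addLeaf p x).verts = insert x N.verts := rfl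

lemma adj_addLeaf (hp : p ∈ N.verts) : (N.addLeaf p x).adj a b ↔ N.adj a b ∨ (a = p ∧ b = x) := by
  apply adj_ofRel
  rintro a b (h | ⟨rfl, rfl⟩)
  · exact ⟨Finset.mem_insert_of_mem (mem_verts_of_adj_left h),
      Finset.mem_insert_of_mem (mem_verts_of_adj_right h)⟩
  · exact ⟨Finset.mem_insert_of_mem hp, Finset.mem_insert_self _ _⟩

lemma children_addLeaf_self (hp : p ∈ N.verts) (hx : x ∉ N.verts) :
    (N.addLeaf p x).children x = ∅ := by
  ext b
  simp only [mem_children, adj_addLeaf hp, Finset.notMem_empty, iff_false, not_or, not_and]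
  exact ⟨fun h => hx (mem_verts_of_adj_left h), fun h => absurd (h ▸ hp) hx⟩

lemma children_addLeaf_parent (hp : p ∈ N.verts) :
    (N.addLeaf p x).children p = insert x (N.children p) := by
  ext b; simp [adj_addLeaf hp, or_comm]

lemma children_addLeaf_of_ne (hp : p ∈ N.verts) (hw : w ≠ p) :
    (N.addLeaf p x).children w = N.children w := by
  ext b; simp [adj_addLeaf hp, hw]

lemma parents_addLeaf_self (hp : p ∈ N.verts) (hx : x ∉ N.verts) :
    (N.addLeaf p x).parents x = {p} := by
  ext a
  simpa [adj_addLeaf hp] using fun h => absurd (mem_verts_of_adj_right h) hx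

lemma parents_addLeaf_of_ne (hp : p ∈ N.verts) (hw : w ≠ x) :
    (N.addLeaf p x).parents w = N.parents w := by
  ext a; simp [adj_addLeaf hp, hw]

lemma reflTransGen_addLeaf (hp : p ∈ N.verts) (h : Relation.ReflTransGen N.adj u v) :
    Relation.ReflTransGen (N.addLeaf p x).adj u v :=
  Relation.ReflTransGen.mono (fun _ _ h => (adj_addLeaf hp).2 (Or.inl h)) _ _ h

lemma reflTransGen_of_reflTransGen_addLeaf (hp : p ∈ N.verts) (hx : x ∉ N.verts)
    (h : Relation.ReflTransGen (N.addLeaf p x).adj u v) (hv : v ≠ x) :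
    Relation.ReflTransGen N.adj u v := by
  induction h with
  | refl => rfl
  | @tail b c _ hbc ih =>
    rcases (adj_addLeaf hp).1 hbc with hbc | ⟨-, rfl⟩
    · exact (ih fun hb => hx (hb ▸ mem_verts_of_adj_left hbc)).tail hbc
    · exact absurd rfl hv

lemma Acyclic.addLeaf (hN : N.Acyclic) (hp : p ∈ N.verts) (hx : x ∉ N.verts) :
    (N.addLeaf p x).Acyclic := by
  intro v hv
  obtain ⟨b, hvb, hbv⟩ := Relation.TransGen.tail'_iff.1 hv
  rcases (adj_addLeaf hp).1 hbv with hbv | ⟨rfl, rfl⟩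
  · have hb : b ≠ x := fun hb => hx (hb ▸ mem_verts_of_adj_left hbv)
    exact hN v (Relation.TransGen.tail' (reflTransGen_of_reflTransGen_addLeaf hp hx hvb hb) hbv)
  · obtain ⟨c, hxc, -⟩ := Relation.TransGen.head'_iff.1 hv
    rcases (adj_addLeaf hp).1 hxc with h | ⟨h, -⟩
    · exact hx (mem_verts_of_adj_left h)
    · exact hx (h ▸ hp)

lemma card_edges_addLeaf (hp : p ∈ N.verts) (hx : x ∉ N.verts) :
    (N.addLeaf p x).edges.card = N.edges.card + 1 := by
  have : (N.addLeaf p x).edges = insert (p, x) N.edges := by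
    ext ⟨a, b⟩; simp [adj_addLeaf hp, or_comm]
  rw [this, Finset.card_insert_of_notMem]
  simpa using fun h => hx (mem_verts_of_adj_right h)

end addLeaf

lemma Acyclic.exists_children_outdeg_eq_zero (hN : N.Acyclic) (hv : v ∈ N.verts)
    (hout : N.outdeg v ≠ 0) :
    ∃ u ∈ N.verts, N.outdeg u ≠ 0 ∧ ∀ c, N.adj u c → N.outdeg c = 0 := by
  classical
  -- a vertex with the fewest descendants among the non-leaves
  let desc a := N.verts.filter (Relation.TransGen N.adj a)
  have hdesc : ∀ {a c}, N.adj a c → (desc c).card < (desc a).card := by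
    intro a c hac
    refine Finset.card_lt_card ⟨fun w hw => ?_, fun hsub => ?_⟩
    · simp only [desc, Finset.mem_filter] at hw ⊢
      exact ⟨hw.1, .head hac hw.2⟩
    · have : c ∈ desc a := Finset.mem_filter.2 ⟨mem_verts_of_adj_right hac, .single hac⟩
      exact hN c (Finset.mem_filter.1 (hsub this)).2
  obtain ⟨u, hu, hmin⟩ := Finset.exists_min_image (N.verts.filter (N.outdeg · ≠ 0))
    (fun a => (desc a).card) ⟨v, Finset.mem_filter.2 ⟨hv, hout⟩⟩
  rw [Finset.mem_filter] at hu
  refine ⟨u, hu.1, hu.2, fun c huc => ?_⟩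
  by_contra hc
  exact (hdesc huc).not_ge (hmin c (Finset.mem_filter.2 ⟨mem_verts_of_adj_right huc, hc⟩))

lemma IsBinary.parents_eq_singleton_of_outdeg_eq_zero (hN : N.IsBinary) (hc : N.outdeg w = 0)
    (hvw : N.adj v w) :
    N.parents w = {v} := by
  obtain ⟨-, ρ, ⟨-, hρ0⟩, -, -, htype⟩ := hN
  have hwρ : w ≠ ρ := by
    rintro rfl
    exact indeg_eq_zero_iff.1 hρ0 v hvw
  have hw1 : N.indeg w = 1 := by
    rcases htype w (mem_verts_of_adj_right hvw) hwρ with h | h | h <;> omega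
  obtain ⟨u, hu⟩ := Finset.card_eq_one.1 (indeg_eq_card_parents ▸ hw1)
  have : v ∈ N.parents w := mem_parents.2 hvw
  rw [hu, Finset.mem_singleton] at this
  rw [hu, this]

structure IsCherry (N : PNet) (v a b : ℕ) : Prop where
  ne : a ≠ b
  children_eq : N.children v = {a, b}
  parents_left : N.parents a = {v}
  parents_right : N.parents b = {v}
  outdeg_left : N.outdeg a = 0
  outdeg_right : N.outdeg b = 0

namespace IsCherry

lemma adj_iff (h : N.IsCherry v a b) : N.adj v w ↔ w = a ∨ w = b := by
  rw [← mem_children, h.children_eq, Finset.mem_insert, Finset.mem_singleton]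

lemma adj_left_iff (h : N.IsCherry v a b) : N.adj u a ↔ u = v := by
  rw [← mem_parents, h.parents_left, Finset.mem_singleton]

lemma adj_right_iff (h : N.IsCherry v a b) : N.adj u b ↔ u = v := by
  rw [← mem_parents, h.parents_right, Finset.mem_singleton]

lemma not_adj_left (h : N.IsCherry v a b) : ¬ N.adj a w := outdeg_eq_zero_iff.1 h.outdeg_left w

lemma not_adj_right (h : N.IsCherry v a b) : ¬ N.adj b w := outdeg_eq_zero_iff.1 h.outdeg_right w

lemma speciation_deleteVerts (h : N.IsCherry v a b) : Speciation (N.deleteVerts {a, b}) N := by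
  have hva : N.adj v a := h.adj_iff.2 (Or.inl rfl)
  have hvb : N.adj v b := h.adj_iff.2 (Or.inr rfl)
  have hvN := mem_verts_of_adj_left hva
  have haN := mem_verts_of_adj_right hva
  have hbN := mem_verts_of_adj_right hvb
  have := @h.adj_iff
  have := @h.adj_left_iff
  have := @h.adj_right_iff
  have := @h.not_adj_left
  have := @h.not_adj_right
  refine ⟨v, a, b, ⟨?_, outdeg_eq_zero_iff.2 ?_⟩, ?_, ?_, h.ne, ?_, ?_⟩ <;>
    grind [adj_deleteVerts, verts_deleteVerts]

lemma singleLeaf_deleteVerts (h : N.IsCherry v a b)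
    (hreach : ∀ w ∈ N.verts, Relation.ReflTransGen N.adj v w) :
    SingleLeaf (N.deleteVerts {a, b}) := by
  have hmem : ∀ w ∈ N.verts, w = v ∨ w = a ∨ w = b := by
    intro w hw
    rcases (hreach w hw).cases_head with rfl | ⟨c, hvc, hcw⟩
    · exact Or.inl rfl
    · have hc := h.adj_iff.1 hvc
      rcases hcw.cases_head with rfl | ⟨d, hcd, -⟩
      · exact Or.inr hc
      · rcases hc with rfl | rfl
        exacts [absurd hcd h.not_adj_left, absurd hcd h.not_adj_right]
  have hvN := mem_verts_of_adj_left (h.adj_iff.2 (Or.inl rfl))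
  have := h.ne
  have := @h.adj_iff
  have := @h.not_adj_left
  have := @h.not_adj_right
  have := N.adj_mem
  refine ⟨v, ?_, fun u w huw => ?_⟩ <;> grind [adj_deleteVerts, verts_deleteVerts]

lemma card_edges_deleteVerts_lt (h : N.IsCherry v a b) :
    (N.deleteVerts {a, b}).edges.card < N.edges.card := by
  rw [edges_deleteVerts]
  refine Finset.card_lt_card (Finset.filter_ssubset.2 ⟨(v, a), ?_, by simp⟩)
  exact mem_edges.2 (h.adj_iff.2 (Or.inl rfl))

lemma isBinary_deleteVerts (h : N.IsCherry v a b) (hN : N.IsBinary) (hv : N.indeg v ≠ 0) :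
    (N.deleteVerts {a, b}).IsBinary := by
  obtain ⟨hac, ρ, ⟨hρ, hρ0⟩, hρ2, hreach, htype⟩ := hN
  have hclosed : ∀ c ∈ ({a, b} : Finset ℕ), ∀ w, ¬ N.adj c w := by
    simpa using ⟨fun w => h.not_adj_left, fun w => h.not_adj_right⟩
  have hindeg : ∀ w ∉ ({a, b} : Finset ℕ), (N.deleteVerts {a, b}).indeg w = N.indeg w :=
    fun w hw => congrArg Finset.card
      (parents_deleteVerts (fun c hc w hcw => absurd hcw (hclosed c hc w)) hw)
  have houtdeg : ∀ w ∉ ({a, b} : Finset ℕ), w ≠ v →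
      (N.deleteVerts {a, b}).outdeg w = N.outdeg w := by
    intro w hw hwv
    rw [outdeg_eq_card_children, outdeg_eq_card_children, children_deleteVerts hw,
      Finset.sdiff_eq_self_of_disjoint]
    refine Finset.disjoint_left.2 fun c hwc hc => hwv ?_
    rw [mem_children] at hwc
    rcases Finset.mem_insert.1 hc with rfl | hc
    · exact h.adj_left_iff.1 hwc
    · exact h.adj_right_iff.1 (Finset.mem_singleton.1 hc ▸ hwc)
  have hva : N.adj v a := h.adj_iff.2 (Or.inl rfl)
  have hvN := mem_verts_of_adj_left hva
  have hvab : v ∉ ({a, b} : Finset ℕ) := fun hv => hclosed v hv a hva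
  have hρab : ρ ∉ ({a, b} : Finset ℕ) := by
    rw [← h.children_eq, mem_children]
    exact indeg_eq_zero_iff.1 hρ0 v
  have hρv : ρ ≠ v := by
    rintro rfl
    exact hv hρ0
  refine ⟨hac.deleteVerts, ρ, ⟨Finset.mem_sdiff.2 ⟨hρ, hρab⟩, ?_⟩, ?_,
    fun w hw => reflTransGen_deleteVerts (fun c hc w hcw => absurd hcw (hclosed c hc w))
      (hreach w (Finset.mem_sdiff.1 hw).1) (Finset.mem_sdiff.1 hw).2, fun w hw hwρ => ?_⟩
  · rw [hindeg ρ hρab, hρ0]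
  · rw [houtdeg ρ hρab hρv, hρ2]
  rw [verts_deleteVerts, Finset.mem_sdiff] at hw
  rw [hindeg w hw.2]
  by_cases hwv : w = v
  · subst hwv
    have hv2 : N.outdeg w = 2 := by
      rw [outdeg_eq_card_children, h.children_eq, Finset.card_pair h.ne]
    have hv0 : (N.deleteVerts {a, b}).outdeg w = 0 := by
      rw [outdeg_eq_card_children, children_deleteVerts hvab, h.children_eq, Finset.sdiff_self,
        Finset.card_empty]
    rcases htype w hvN hwρ with hw' | hw' | hw' <;> omega
  · rw [houtdeg w hw.2 hwv]
    exact htype w hw.1 hwρ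

end IsCherry

lemma IsBinary.exists_isCherry (hN : N.IsBinary) (hv : N.outdeg v = 2)
    (hleaves : ∀ c, N.adj v c → N.outdeg c = 0) : ∃ a b, N.IsCherry v a b := by
  obtain ⟨a, b, hab, hvab⟩ := Finset.card_eq_two.1 (outdeg_eq_card_children ▸ hv)
  have hva : N.adj v a := mem_children.1 (hvab ▸ Finset.mem_insert_self a {b})
  have hvb : N.adj v b := mem_children.1 (hvab ▸ by simp)
  exact ⟨a, b, hab, hvab, hN.parents_eq_singleton_of_outdeg_eq_zero (hleaves a hva) hva,
    hN.parents_eq_singleton_of_outdeg_eq_zero (hleaves b hvb) hvb, hleaves a hva, hleaves b hvb⟩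

def Event (A B : PNet) : Prop := Speciation A B ∨ MType A B ∨ Extinct A B

lemma exists_two_notMem (s : Finset ℕ) : ∃ a b, a ∉ s ∧ b ∉ s ∧ a ≠ b := by
  obtain ⟨a, ha⟩ := s.exists_notMem
  obtain ⟨b, hb⟩ := (insert a s).exists_notMem
  rw [Finset.mem_insert, not_or] at hb
  exact ⟨a, b, ha, hb.2, Ne.symm hb.1⟩

/-- A y-merge of the leaves `x` and `y` into a fresh reticulation `w` with a fresh leaf child `z`
is an m-type event followed by the extinctions of the leaves `x'` and `y'` that it creates. -/
lemma reflTransGen_event_of_merge {A B : PNet} {x y px py w z : ℕ} (hxy : x ≠ y)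
    (hx : A.IsLeaf x) (hy : A.IsLeaf y) (hpx : A.adj px x) (hpy : A.adj py y)
    (hw : w ∉ A.verts) (hz : z ∉ A.verts) (hwz : w ≠ z)
    (hBverts : B.verts = insert w (insert z (A.verts \ {x, y})))
    (hBadj : ∀ a b, B.adj a b ↔
      (A.adj a b ∧ b ≠ x ∧ b ≠ y) ∨ (a = px ∧ b = w) ∨ (a = py ∧ b = w) ∨ (a = w ∧ b = z)) :
    Relation.ReflTransGen Event A B := by
  obtain ⟨x', y', hx', hy', hx'y'⟩ := exists_two_notMem (insert w (insert z A.verts))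
  simp only [Finset.mem_insert, not_or] at hx' hy'
  have hxA := hx.1
  have hyA := hy.1
  have hxout := outdeg_eq_zero_iff.1 hx.2
  have hyout := outdeg_eq_zero_iff.1 hy.2
  have hA := A.adj_mem
  set C := ofRel (insert x' (insert y' (insert w (insert z A.verts)))) fun a b =>
    A.adj a b ∨ (a = x ∧ b = x') ∨ (a = x ∧ b = w) ∨ (a = y ∧ b = y') ∨ (a = y ∧ b = w) ∨
      (a = w ∧ b = z)
  have hCadj : ∀ a b, C.adj a b ↔ A.adj a b ∨ (a = x ∧ b = x') ∨ (a = x ∧ b = w) ∨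
      (a = y ∧ b = y') ∨ (a = y ∧ b = w) ∨ (a = w ∧ b = z) :=
    fun a b => adj_ofRel (by grind)
  set D := ofRel (C.verts \ {x', x}) fun a b =>
    (C.adj a b ∧ a ≠ x ∧ b ≠ x ∧ b ≠ x') ∨ (a = px ∧ b = w)
  have hDadj : ∀ a b, D.adj a b ↔ (C.adj a b ∧ a ≠ x ∧ b ≠ x ∧ b ≠ x') ∨ (a = px ∧ b = w) :=
    fun a b => adj_ofRel (by grind [verts_ofRel])
  have hmtype : MType A C := ⟨x, y, x', y', w, z, hxy, hx, hy, by grind, by grind, hw, hz,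
    hx'y', by grind, by grind, by grind, by grind, hwz, rfl, hCadj⟩
  have hextinct₁ : Extinct C D := by
    refine ⟨x', x, w, ⟨by simp [C], outdeg_eq_zero_iff.2 ?_⟩, ?_, ?_, by grind,
      Or.inr ⟨px, ?_, rfl, hDadj⟩⟩ <;> grind [verts_ofRel]
  have hextinct₂ : Extinct D B := by
    refine ⟨y', y, w, ⟨?_, outdeg_eq_zero_iff.2 ?_⟩, ?_, ?_, by grind,
      Or.inr ⟨py, ?_, ?_, ?_⟩⟩ <;> grind [verts_ofRel]
  exact .tail (.tail (.single (Or.inr (Or.inl hmtype))) (Or.inr (Or.inr hextinct₁)))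
    (Or.inr (Or.inr hextinct₂))

structure IsLeafRetic (N : PNet) (v z p q : ℕ) : Prop where
  ne : p ≠ q
  parents_eq : N.parents v = {p, q}
  children_eq : N.children v = {z}
  parents_leaf : N.parents z = {v}
  outdeg_leaf : N.outdeg z = 0

namespace IsLeafRetic

variable {z p q : ℕ}

lemma adj_iff_parent (h : N.IsLeafRetic v z p q) : N.adj u v ↔ u = p ∨ u = q := by
  rw [← mem_parents, h.parents_eq, Finset.mem_insert, Finset.mem_singleton]

lemma adj_iff_child (h : N.IsLeafRetic v z p q) : N.adj v w ↔ w = z := by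
  rw [← mem_children, h.children_eq, Finset.mem_singleton]

lemma adj_leaf_iff (h : N.IsLeafRetic v z p q) : N.adj u z ↔ u = v := by
  rw [← mem_parents, h.parents_leaf, Finset.mem_singleton]

lemma not_adj_leaf (h : N.IsLeafRetic v z p q) : ¬ N.adj z w :=
  outdeg_eq_zero_iff.1 h.outdeg_leaf w

lemma closed (h : N.IsLeafRetic v z p q) :
    ∀ c ∈ ({v, z} : Finset ℕ), ∀ w, N.adj c w → w ∈ ({v, z} : Finset ℕ) := by
  simp only [Finset.mem_insert, Finset.mem_singleton]
  rintro c (rfl | rfl) w hcw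
  · exact Or.inr (h.adj_iff_child.1 hcw)
  · exact absurd hcw h.not_adj_leaf

lemma mem_of_adj (h : N.IsLeafRetic v z p q) (hu : N.adj u v) : u ∈ N.verts \ {v, z} := by
  have := @h.adj_iff_child
  have := @h.not_adj_leaf
  have := N.adj_mem
  grind

lemma left_mem (h : N.IsLeafRetic v z p q) : p ∈ N.verts \ {v, z} :=
  h.mem_of_adj (h.adj_iff_parent.2 (Or.inl rfl))

lemma right_mem (h : N.IsLeafRetic v z p q) : q ∈ N.verts \ {v, z} :=
  h.mem_of_adj (h.adj_iff_parent.2 (Or.inr rfl))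

end IsLeafRetic

/-- The inverse of a y-merge: the reticulation `v` with parents `p`, `q` and its leaf child `z` are
replaced by the leaves `x` below `p` and `y` below `q`. -/
def unmerge (N : PNet) (v z p q x y : ℕ) : PNet :=
  ((N.deleteVerts {v, z}).addLeaf p x).addLeaf q y

section unmerge

variable {z p q x y : ℕ}

@[simp] lemma verts_unmerge :
    (N.unmerge v z p q x y).verts = insert y (insert x (N.verts \ {v, z})) := rfl

lemma adj_unmerge (h : N.IsLeafRetic v z p q) : (N.unmerge v z p q x y).adj a b ↔
    (N.adj a b ∧ a ∉ ({v, z} : Finset ℕ) ∧ b ∉ ({v, z} : Finset ℕ)) ∨ (a = p ∧ b = x) ∨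
      (a = q ∧ b = y) := by
  rw [unmerge, adj_addLeaf (Finset.mem_insert_of_mem h.right_mem), adj_addLeaf h.left_mem,
    adj_deleteVerts, or_assoc]

lemma reflTransGen_event_unmerge (h : N.IsLeafRetic v z p q) (hx : x ∉ N.verts)
    (hy : y ∉ N.verts) (hxy : x ≠ y) :
    Relation.ReflTransGen Event (N.unmerge v z p q x y) N := by
  have hadj : ∀ a b, (N.unmerge v z p q x y).adj a b ↔ _ := fun a b => adj_unmerge h
  have := @h.adj_iff_parent
  have := @h.adj_iff_child
  have := @h.adj_leaf_iff
  have := @h.not_adj_leaf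
  have := h.left_mem
  have := h.right_mem
  have := N.adj_mem
  have := h.adj_iff_child.2 rfl
  refine reflTransGen_event_of_merge (px := p) (py := q) (w := v) (z := z) hxy ?_ ?_ ?_ ?_ ?_ ?_ ?_
    (by ext; simp; grind) ?_ <;> grind [IsLeaf, outdeg_eq_zero_iff, verts_unmerge]

lemma card_edges_unmerge_lt (h : N.IsLeafRetic v z p q) (hx : x ∉ N.verts) (hy : y ∉ N.verts)
    (hxy : x ≠ y) : (N.unmerge v z p q x y).edges.card < N.edges.card := by
  have hpv := h.adj_iff_parent.2 (Or.inl rfl)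
  have hqv := h.adj_iff_parent.2 (Or.inr rfl)
  have hvz := h.adj_iff_child.2 rfl
  have hcut : ({(p, v), (q, v), (v, z)} : Finset (ℕ × ℕ)) ⊆
      N.edges.filter fun e => ¬ (e.1 ∉ ({v, z} : Finset ℕ) ∧ e.2 ∉ ({v, z} : Finset ℕ)) := by
    simp [Finset.insert_subset_iff, hpv, hqv, hvz]
  have hthree : ({(p, v), (q, v), (v, z)} : Finset (ℕ × ℕ)).card = 3 := by
    have := h.ne
    have := h.left_mem
    have := h.right_mem
    rw [Finset.card_eq_three]
    exact ⟨_, _, _, by grind, by grind, by grind, rfl⟩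
  have hsplit := Finset.card_filter_add_card_filter_not (s := N.edges)
    fun e => e.1 ∉ ({v, z} : Finset ℕ) ∧ e.2 ∉ ({v, z} : Finset ℕ)
  have hyD : y ∉ insert x (N.verts \ {v, z}) := by simp [hy, Ne.symm hxy]
  rw [unmerge, card_edges_addLeaf (Finset.mem_insert_of_mem h.right_mem) hyD,
    card_edges_addLeaf h.left_mem (by simp [hx]), edges_deleteVerts]
  have := Finset.card_le_card hcut
  omega

lemma indeg_unmerge (h : N.IsLeafRetic v z p q) (hx : x ∉ N.verts) (hy : y ∉ N.verts)
    (hw : w ∈ N.verts \ {v, z}) : (N.unmerge v z p q x y).indeg w = N.indeg w := by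
  have hwN := (Finset.mem_sdiff.1 hw).1
  rw [indeg_eq_card_parents, indeg_eq_card_parents, unmerge,
    parents_addLeaf_of_ne (Finset.mem_insert_of_mem h.right_mem) (by grind),
    parents_addLeaf_of_ne h.left_mem (by grind),
    parents_deleteVerts h.closed (Finset.mem_sdiff.1 hw).2]

lemma outdeg_unmerge (h : N.IsLeafRetic v z p q) (hx : x ∉ N.verts) (hy : y ∉ N.verts)
    (hw : w ∈ N.verts \ {v, z}) : (N.unmerge v z p q x y).outdeg w = N.outdeg w := by
  have hpD := h.left_mem
  have hqB : q ∈ insert x (N.verts \ {v, z}) := Finset.mem_insert_of_mem h.right_mem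
  have hwT := (Finset.mem_sdiff.1 hw).2
  have herase : (N.deleteVerts {v, z}).children w = (N.children w).erase v := by
    rw [children_deleteVerts hwT]
    ext c
    have := @h.adj_leaf_iff
    simp only [Finset.mem_sdiff, Finset.mem_erase, mem_children, Finset.mem_insert,
      Finset.mem_singleton]
    grind
  -- `p` and `q` trade their child `v` for the new leaves `x` and `y`
  have hcard : ∀ t ∉ N.verts, w = p ∨ w = q →
      (insert t ((N.children w).erase v)).card = N.outdeg w := by
    intro t ht hwpq
    have htw : t ∉ (N.children w).erase v :=
      fun h' => ht (mem_verts_of_adj_right (mem_children.1 (Finset.mem_of_mem_erase h')))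
    rw [Finset.card_insert_of_notMem htw,
      Finset.card_erase_add_one (mem_children.2 (h.adj_iff_parent.2 hwpq))]
    rfl
  rw [outdeg_eq_card_children, unmerge]
  by_cases hwq : w = q
  · subst hwq
    rw [children_addLeaf_parent hqB, children_addLeaf_of_ne hpD (Ne.symm h.ne), herase]
    exact hcard y hy (Or.inr rfl)
  rw [children_addLeaf_of_ne hqB hwq]
  by_cases hwp : w = p
  · subst hwp
    rw [children_addLeaf_parent hpD, herase]
    exact hcard x hx (Or.inl rfl)
  rw [children_addLeaf_of_ne hpD hwp, herase, Finset.erase_eq_of_notMem]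
  · rfl
  · rw [mem_children, h.adj_iff_parent]
    tauto

lemma degrees_unmerge_left (h : N.IsLeafRetic v z p q) (hx : x ∉ N.verts) (hxy : x ≠ y) :
    (N.unmerge v z p q x y).indeg x = 1 ∧ (N.unmerge v z p q x y).outdeg x = 0 := by
  have hxD : x ∉ N.verts \ {v, z} := fun h' => hx (Finset.mem_sdiff.1 h').1
  have hxq : x ≠ q := fun h' => hx (h' ▸ (Finset.mem_sdiff.1 h.right_mem).1)
  rw [indeg_eq_card_parents, outdeg_eq_card_children, unmerge,
    parents_addLeaf_of_ne (Finset.mem_insert_of_mem h.right_mem) hxy,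
    parents_addLeaf_self h.left_mem hxD,
    children_addLeaf_of_ne (Finset.mem_insert_of_mem h.right_mem) hxq,
    children_addLeaf_self h.left_mem hxD]
  simp

lemma degrees_unmerge_right (h : N.IsLeafRetic v z p q) (hy : y ∉ N.verts) (hxy : x ≠ y) :
    (N.unmerge v z p q x y).indeg y = 1 ∧ (N.unmerge v z p q x y).outdeg y = 0 := by
  have hyB : y ∉ insert x (N.verts \ {v, z}) := by simp [hy, Ne.symm hxy]
  rw [indeg_eq_card_parents, outdeg_eq_card_children, unmerge,
    parents_addLeaf_self (Finset.mem_insert_of_mem h.right_mem) hyB,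
    children_addLeaf_self (Finset.mem_insert_of_mem h.right_mem) hyB]
  simp

lemma Acyclic.unmerge (hN : N.Acyclic) (h : N.IsLeafRetic v z p q) (hx : x ∉ N.verts)
    (hy : y ∉ N.verts) (hxy : x ≠ y) : (N.unmerge v z p q x y).Acyclic :=
  (hN.deleteVerts.addLeaf h.left_mem (by simp [hx])).addLeaf
    (Finset.mem_insert_of_mem h.right_mem) (by simp [hy, Ne.symm hxy])

lemma reflTransGen_unmerge (h : N.IsLeafRetic v z p q) (hreach : Relation.ReflTransGen N.adj u w)
    (hw : w ∉ ({v, z} : Finset ℕ)) : Relation.ReflTransGen (N.unmerge v z p q x y).adj u w :=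
  reflTransGen_addLeaf (Finset.mem_insert_of_mem h.right_mem)
    (reflTransGen_addLeaf h.left_mem (reflTransGen_deleteVerts h.closed hreach hw))

lemma IsBinary.unmerge (hN : N.IsBinary) (h : N.IsLeafRetic v z p q) (hx : x ∉ N.verts)
    (hy : y ∉ N.verts) (hxy : x ≠ y) : (N.unmerge v z p q x y).IsBinary := by
  obtain ⟨hac, ρ, ⟨hρ, hρ0⟩, hρ2, hreach, htype⟩ := hN
  have hρD : ρ ∈ N.verts \ {v, z} := by
    refine Finset.mem_sdiff.2 ⟨hρ, ?_⟩
    simp only [Finset.mem_insert, Finset.mem_singleton, not_or]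
    exact ⟨fun e => indeg_eq_zero_iff.1 hρ0 p (e ▸ h.adj_iff_parent.2 (Or.inl rfl)),
      fun e => indeg_eq_zero_iff.1 hρ0 v (e ▸ h.adj_iff_child.2 rfl)⟩
  have hreach' : ∀ w ∈ N.verts \ {v, z}, Relation.ReflTransGen (N.unmerge v z p q x y).adj ρ w :=
    fun w hw =>
      reflTransGen_unmerge h (hreach w (Finset.mem_sdiff.1 hw).1) (Finset.mem_sdiff.1 hw).2
  refine ⟨hac.unmerge h hx hy hxy, ρ, ⟨by simp [hρD], by rw [indeg_unmerge h hx hy hρD, hρ0]⟩,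
    by rw [outdeg_unmerge h hx hy hρD, hρ2], fun w hw => ?_, fun w hw hwρ => ?_⟩ <;>
    rw [verts_unmerge, Finset.mem_insert, Finset.mem_insert] at hw
  · rcases hw with rfl | rfl | hw
    · exact (hreach' q h.right_mem).tail ((adj_unmerge h).2 (Or.inr (Or.inr ⟨rfl, rfl⟩)))
    · exact (hreach' p h.left_mem).tail ((adj_unmerge h).2 (Or.inr (Or.inl ⟨rfl, rfl⟩)))
    · exact hreach' w hw
  · rcases hw with rfl | rfl | hw
    · exact Or.inr (Or.inr (degrees_unmerge_right h hy hxy))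
    · exact Or.inr (Or.inr (degrees_unmerge_left h hx hxy))
    · rw [indeg_unmerge h hx hy hw, outdeg_unmerge h hx hy hw]
      exact htype w (Finset.mem_sdiff.1 hw).1 hwρ

end unmerge

lemma IsBinary.exists_isLeafRetic (hN : N.IsBinary) (hin : N.indeg v = 2) (hout : N.outdeg v = 1)
    (hleaves : ∀ c, N.adj v c → N.outdeg c = 0) : ∃ z p q, N.IsLeafRetic v z p q := by
  obtain ⟨p, q, hpq, hpar⟩ := Finset.card_eq_two.1 (indeg_eq_card_parents ▸ hin)
  obtain ⟨z, hch⟩ := Finset.card_eq_one.1 (outdeg_eq_card_children ▸ hout)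
  have hvz : N.adj v z := mem_children.1 (hch ▸ Finset.mem_singleton_self z)
  exact ⟨z, p, q, hpq, hpar, hch,
    hN.parents_eq_singleton_of_outdeg_eq_zero (hleaves z hvz) hvz, hleaves z hvz⟩

lemma IsBinary.exists_reduction (hN : N.IsBinary) :
    (∃ N₀, SingleLeaf N₀ ∧ Event N₀ N) ∨
      ∃ A, A.IsBinary ∧ A.edges.card < N.edges.card ∧ Relation.ReflTransGen Event A N := by
  obtain ⟨hac, ρ, ⟨hρ, hρ0⟩, hρ2, hreach, htype⟩ := id hN
  obtain ⟨v, hv, hvout, hleaves⟩ := hac.exists_children_outdeg_eq_zero hρ (by omega)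
  by_cases hvρ : v = ρ
  · subst hvρ
    obtain ⟨a, b, hab⟩ := hN.exists_isCherry hρ2 hleaves
    exact Or.inl ⟨_, hab.singleLeaf_deleteVerts hreach, Or.inl hab.speciation_deleteVerts⟩
  right
  rcases htype v hv hvρ with ⟨hvin, hvout2⟩ | ⟨hvin, hvout1⟩ | ⟨-, hvout0⟩
  · obtain ⟨a, b, hab⟩ := hN.exists_isCherry hvout2 hleaves
    exact ⟨_, hab.isBinary_deleteVerts hN (by omega), hab.card_edges_deleteVerts_lt,
      .single (Or.inl hab.speciation_deleteVerts)⟩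
  · obtain ⟨z, p, q, hret⟩ := hN.exists_isLeafRetic hvin hvout1 hleaves
    obtain ⟨x, y, hx, hy, hxy⟩ := exists_two_notMem N.verts
    exact ⟨_, hN.unmerge hret hx hy hxy, card_edges_unmerge_lt hret hx hy hxy,
      reflTransGen_event_unmerge hret hx hy hxy⟩
  · exact absurd hvout0 hvout

theorem IsBinary.exists_singleLeaf_reflTransGen (hN : N.IsBinary) :
    ∃ N₀, SingleLeaf N₀ ∧ Relation.ReflTransGen Event N₀ N := by
  induction h : N.edges.card using Nat.strong_induction_on generalizing N with
  | _ n ih =>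
    rcases hN.exists_reduction with ⟨N₀, h₀, hN₀⟩ | ⟨A, hA, hlt, hAN⟩
    · exact ⟨N₀, h₀, .single hN₀⟩
    · obtain ⟨N₀, h₀, hN₀A⟩ := ih _ (h ▸ hlt) hA rfl
      exact ⟨N₀, h₀, hN₀A.trans hAN⟩

end PNet

open PNet in
/-- Any binary phylogenetic network can be generated (up to isomorphism) from
the single-leaf network by speciation, m-type hybrid-speciation, and extinction
events. -/
theorem stmt15 (N : PNet) (hbin : N.IsBinary) :
    ∃ N₀ M, SingleLeaf N₀ ∧
      Relation.ReflTransGen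
        (fun A B => Speciation A B ∨ MType A B ∨ Extinct A B) N₀ M ∧
      Iso M N := by
  obtain ⟨N₀, h₀, hN₀⟩ := hbin.exists_singleLeaf_reflTransGen
  exact ⟨N₀, N, h₀, hN₀, id, Set.bijOn_id _, fun _ _ _ _ => Iff.rfl⟩
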